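/- Let R > 0, ν > 1, 0 < l ≤ πR, and set α := sin(l/(2R)) and h₊(x) := (1/ν)( −sin²[x/(2R)] + cos[x/(2R)]√(ν² − sin²[x/(2R)]) ). Then ∫₀^l [ (h₊(σ + 2πR − l) − h₊(2πR)) + (h₊(0) − h₊(σ)) ] dσ = 2l − 2H(α,ν), where H(α,ν) := R( (α/ν)√(ν² − α²) + ν arcsin(α/ν) ). (Note h₊(0) = 1 and h₊(2πR) = −1 for ν > 1.) -/

import Mathlib

open Real intervalIntegral

/-! An antiderivative of `h₊` is `K(x) = H(sin[x/(2R)], ν) − (x − R sin(x/R))/(2ν)`: the term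
`cos[x/(2R)] √(ν² − sin²[x/(2R)]) / ν` is the derivative of `x ↦ H(sin[x/(2R)], ν)`, and
`sin²[x/(2R)] = (1 − cos(x/R))/2`. As `sin[x/(2R)]` is invariant under `x ↦ 2πR − x`,
`K(2πR − x) + K(x) = 2H(sin[x/(2R)], ν) − πR/ν`. Since `h₊(0) = 1` and `h₊(2πR) = −1`, the integral
is `2l + K(2πR) − K(2πR − l) − K(l) + K(0) = 2l − 2H(α, ν)`. -/

/-- `h₊(x) = (1/ν)(−sin²[x/(2R)] + cos[x/(2R)] √(ν² − sin²[x/(2R)]))`. -/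
noncomputable def hPlus (R ν x : ℝ) : ℝ :=
  (1 / ν) * (-(sin (x / (2 * R))) ^ 2
    + cos (x / (2 * R)) * Real.sqrt (ν ^ 2 - (sin (x / (2 * R))) ^ 2))

/-- `H(α,ν) = R((α/ν)√(ν² − α²) + ν arcsin(α/ν))`. -/
noncomputable def Hfun (R α ν : ℝ) : ℝ :=
  R * ((α / ν) * Real.sqrt (ν ^ 2 - α ^ 2) + ν * arcsin (α / ν))

lemma hasDerivAt_Hfun (R : ℝ) {α ν : ℝ} (hν : 0 < ν) (hα : |α| < ν) :
    HasDerivAt (fun α => Hfun R α ν) (2 * R / ν * √(ν ^ 2 - α ^ 2)) α := by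
  have hq : 0 < ν ^ 2 - α ^ 2 := by nlinarith [sq_abs α, abs_nonneg α]
  have hsq : √(ν ^ 2 - α ^ 2) ^ 2 = ν ^ 2 - α ^ 2 := sq_sqrt hq.le
  have hsqrt := ((hasDerivAt_id α).pow 2 |>.const_sub (ν ^ 2)).sqrt hq.ne'
  have hdiv : HasDerivAt (fun α : ℝ => α / ν) (1 / ν) α := (hasDerivAt_id α).div_const ν
  have hlt : |α / ν| < 1 := by rwa [abs_div, abs_of_pos hν, div_lt_one hν]
  have harcsin := (hasDerivAt_arcsin (abs_lt.mp hlt).1.ne' (abs_lt.mp hlt).2.ne).comp α hdiv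
  have hsqrt_one_sub : √(1 - (α / ν) ^ 2) = √(ν ^ 2 - α ^ 2) / ν := by
    rw [show 1 - (α / ν) ^ 2 = (ν ^ 2 - α ^ 2) / ν ^ 2 by field_simp, sqrt_div hq.le,
      sqrt_sq hν.le]
  refine (((hdiv.mul hsqrt).add (harcsin.const_mul ν)).const_mul R).congr_deriv ?_
  rw [hsqrt_one_sub]
  have hsqrt_pos : 0 < √(ν ^ 2 - α ^ 2) := sqrt_pos.mpr hq
  simp only [id, Pi.pow_apply]
  field_simp
  rw [hsq]
  ring

noncomputable def hPlusPrimitive (R ν x : ℝ) : ℝ :=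
  Hfun R (sin (x / (2 * R))) ν - (x - R * sin (x / R)) / (2 * ν)

lemma hasDerivAt_hPlusPrimitive {R ν : ℝ} (hR : R ≠ 0) (hν : 1 < ν) (x : ℝ) :
    HasDerivAt (hPlusPrimitive R ν) (hPlus R ν x) x := by
  have hν0 : 0 < ν := one_pos.trans hν
  have hsin_half : HasDerivAt (fun x => sin (x / (2 * R))) (cos (x / (2 * R)) / (2 * R)) x := by
    simpa [div_eq_mul_inv] using ((hasDerivAt_id x).div_const (2 * R)).sin
  have hsin : HasDerivAt (fun x => sin (x / R)) (cos (x / R) / R) x := by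
    simpa [div_eq_mul_inv] using ((hasDerivAt_id x).div_const R).sin
  have hbound : |sin (x / (2 * R))| < ν := (abs_sin_le_one _).trans_lt hν
  have hH := (hasDerivAt_Hfun R hν0 hbound).comp x hsin_half
  have hK := hH.sub (((hasDerivAt_id x).sub (hsin.const_mul R)).div_const (2 * ν))
  refine hK.congr_deriv ?_
  have hcos : cos (x / R) = 1 - 2 * sin (x / (2 * R)) ^ 2 := by
    rw [show x / R = 2 * (x / (2 * R)) by field_simp, cos_two_mul, cos_sq']
    ring
  rw [hPlus, hcos]
  field_simp
  ring

lemma continuous_hPlus (R ν : ℝ) : Continuous (hPlus R ν) := by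
  unfold hPlus
  fun_prop

lemma integral_hPlus {R ν : ℝ} (hR : R ≠ 0) (hν : 1 < ν) (a b : ℝ) :
    ∫ x in a..b, hPlus R ν x = hPlusPrimitive R ν b - hPlusPrimitive R ν a :=
  integral_eq_sub_of_hasDerivAt (fun x _ => hasDerivAt_hPlusPrimitive hR hν x)
    ((continuous_hPlus R ν).intervalIntegrable a b)

lemma hPlus_zero (R : ℝ) {ν : ℝ} (hν : 0 < ν) : hPlus R ν 0 = 1 := by
  simp [hPlus, sqrt_sq hν.le, hν.ne']

lemma hPlus_two_pi_mul {R ν : ℝ} (hR : R ≠ 0) (hν : 0 < ν) : hPlus R ν (2 * π * R) = -1 := by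
  rw [hPlus, show 2 * π * R / (2 * R) = π by field_simp]
  simp [sqrt_sq hν.le, hν.ne']

lemma hPlusPrimitive_zero (R ν : ℝ) : hPlusPrimitive R ν 0 = 0 := by
  simp [hPlusPrimitive, Hfun]

lemma hPlusPrimitive_two_pi_mul_sub_add {R : ℝ} (hR : R ≠ 0) (ν x : ℝ) :
    hPlusPrimitive R ν (2 * π * R - x) + hPlusPrimitive R ν x =
      2 * Hfun R (sin (x / (2 * R))) ν - π * R / ν := by
  have hhalf : (2 * π * R - x) / (2 * R) = π - x / (2 * R) := by field_simp
  have hfull : (2 * π * R - x) / R = 2 * π - x / R := by field_simp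
  rw [hPlusPrimitive, hPlusPrimitive, hhalf, hfull, sin_pi_sub, sin_two_pi_sub]
  ring

lemma hPlusPrimitive_two_pi_mul {R : ℝ} (hR : R ≠ 0) (ν : ℝ) :
    hPlusPrimitive R ν (2 * π * R) = -(π * R / ν) := by
  simpa [hPlusPrimitive_zero, Hfun] using hPlusPrimitive_two_pi_mul_sub_add hR ν 0

theorem integral_h_reflection_general (R ν l : ℝ) (hR : 0 < R) (hν : 1 < ν) :
    ∫ σ in (0 : ℝ)..l,
        ((hPlus R ν (σ + 2 * π * R - l) - hPlus R ν (2 * π * R))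
          + (hPlus R ν 0 - hPlus R ν σ)) =
      2 * l - 2 * Hfun R (sin (l / (2 * R))) ν := by
  have hν0 : 0 < ν := one_pos.trans hν
  calc ∫ σ in (0 : ℝ)..l,
        ((hPlus R ν (σ + 2 * π * R - l) - hPlus R ν (2 * π * R)) + (hPlus R ν 0 - hPlus R ν σ))
      = ∫ σ in (0 : ℝ)..l, (2 + (hPlus R ν (σ + (2 * π * R - l)) - hPlus R ν σ)) := by
        congr 1
        funext σ
        rw [hPlus_zero R hν0, hPlus_two_pi_mul hR.ne' hν0, add_sub_assoc σ]
        ring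
    _ = 2 * l + ((∫ σ in (2 * π * R - l)..(2 * π * R), hPlus R ν σ)
          - ∫ σ in (0 : ℝ)..l, hPlus R ν σ) := by
        have hint : IntervalIntegrable (hPlus R ν) MeasureTheory.volume 0 l :=
          (continuous_hPlus R ν).intervalIntegrable 0 l
        have hshifted_int : IntervalIntegrable (fun σ => hPlus R ν (σ + (2 * π * R - l)))
            MeasureTheory.volume 0 l :=
          ((continuous_hPlus R ν).comp (continuous_add_const _)).intervalIntegrable 0 l
        rw [integral_add intervalIntegrable_const (hshifted_int.sub hint),
          integral_sub hshifted_int hint, integral_comp_add_right (hPlus R ν), zero_add,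
          add_sub_cancel, integral_const, sub_zero, smul_eq_mul, mul_comm]
    _ = 2 * l - 2 * Hfun R (sin (l / (2 * R))) ν := by
        rw [integral_hPlus hR.ne' hν, integral_hPlus hR.ne' hν, hPlusPrimitive_zero,
          hPlusPrimitive_two_pi_mul hR.ne']
        linarith [hPlusPrimitive_two_pi_mul_sub_add hR.ne' ν l]

/-- For `ν > 1` and `0 < l ≤ πR`, with `α = sin(l/(2R))`, one has
`∫₀^l [(h₊(σ + 2πR − l) − h₊(2πR)) + (h₊(0) − h₊(σ))] dσ = 2l − 2H(α, ν)`. -/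
theorem integral_h_reflection (R ν l : ℝ) (hR : 0 < R) (hν : 1 < ν)
    (hl0 : 0 < l) (hl : l ≤ π * R) :
    ∫ σ in (0 : ℝ)..l,
        ((hPlus R ν (σ + 2 * π * R - l) - hPlus R ν (2 * π * R))
          + (hPlus R ν 0 - hPlus R ν σ)) =
      2 * l - 2 * Hfun R (sin (l / (2 * R))) ν :=
  integral_h_reflection_general R ν l hR hν
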